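/- The optimal value of the following semidefinite program equals 2/3: maximize (1/3)·Σ_{y∈{0,1,2}} ⟨φ_y|σ_y|φ_y⟩ over density matrices σ₀, σ₁, σ₂ on ℂ³ ⊗ ℂ³ subject to Tr_A(σ₀) = Tr_A(σ₁) = Tr_A(σ₂). Moreover, the optimum is attained by feasible σ₀, σ₁, σ₂ whose common marginal Tr_A(σ_y) equals (1/3)·1_{ℂ³}. (This is Alice's optimal probability of forcing any fixed outcome in the three-outcome die rolling protocol.) -/

import Mathlib

/-!
The value 2/3 is certified by a matching primal-dual pair.

For positive semidefinite `σ` and `φ = (|aa⟩ + |bb⟩)/√2`, the parallelogram identity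
gives `⟨φ|σ|φ⟩ ≤ σ_{aa,aa} + σ_{bb,bb} ≤ ρ_aa + ρ_bb` with `ρ = Tr_A σ`. Every index of `ℂ³`
occurs in exactly two of `φ₀, φ₁, φ₂`, so with a common marginal `ρ` the objective is at most
`(1/3) · 2 · Tr ρ = 2/3`.

Conversely `σ_y = (2/3)|φ_y⟩⟨φ_y| + (1/3)|gg⟩⟨gg|`, with `g` the index missing from `φ_y`,
has `⟨φ_y|σ_y|φ_y⟩ = 2/3` and marginal `(1/3) · 1`.
-/

open Matrix
open scoped Matrix BigOperators ComplexOrder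

noncomputable section

/-- Square matrices over ℂ indexed by `α`. -/
abbrev Mat (α : Type) : Type := Matrix α α ℂ

/-- A density matrix: positive semidefinite with unit trace. -/
def IsDensity {α : Type} [Fintype α] [DecidableEq α] (ρ : Mat α) : Prop :=
  ρ.PosSemidef ∧ ρ.trace = 1

/-- Hilbert–Schmidt inner product ⟨P, Q⟩ = Tr(P† Q). -/
def hs {α : Type} [Fintype α] (P Q : Mat α) : ℂ := (Pᴴ * Q).trace

/-- Outer product |v⟩⟨v|. -/
def outer {α : Type} (v : α → ℂ) : Mat α := fun i j => v i * star (v j)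

/-- Standard basis vector |i⟩. -/
def ket {α : Type} [DecidableEq α] (i : α) : α → ℂ := fun j => if j = i then 1 else 0

/-- The embedding of Fin 2 into Fin 3. -/
def f23 (y : Fin 2) : Fin 3 := ⟨y.val, by omega⟩

/-- |φ_y⟩ = (|yy⟩ + |22⟩)/√2 ∈ ℂ³ ⊗ ℂ³. -/
def phi (y : Fin 2) : Fin 3 × Fin 3 → ℂ :=
  fun p => (ket (f23 y, f23 y) p + ket ((2 : Fin 3), (2 : Fin 3)) p) / (Real.sqrt 2 : ℂ)

/-- Partial trace over the first tensor factor. -/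
def ptrA {α β : Type} [Fintype α] (ρ : Mat (α × β)) : Mat β :=
  fun b b' => ∑ a, ρ (a, b) (a, b')

/-- |φ₀⟩ = (|00⟩+|22⟩)/√2, |φ₁⟩ = (|11⟩+|22⟩)/√2, |φ₂⟩ = (|00⟩+|11⟩)/√2. -/
def phiD (y : Fin 3) : Fin 3 × Fin 3 → ℂ := fun p =>
  if y = 0 then (ket ((0 : Fin 3), (0 : Fin 3)) p + ket ((2 : Fin 3), (2 : Fin 3)) p) / (Real.sqrt 2 : ℂ)
  else if y = 1 then (ket ((1 : Fin 3), (1 : Fin 3)) p + ket ((2 : Fin 3), (2 : Fin 3)) p) / (Real.sqrt 2 : ℂ)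
  else (ket ((0 : Fin 3), (0 : Fin 3)) p + ket ((1 : Fin 3), (1 : Fin 3)) p) / (Real.sqrt 2 : ℂ)

section General

variable {α : Type} [Fintype α]

theorem hs_outer (v : α → ℂ) (σ : Mat α) : hs (outer v) σ = star v ⬝ᵥ σ *ᵥ v := by
  have hH : (outer v)ᴴ = outer v := by
    ext i j; simp [outer, conjTranspose_apply, mul_comm]
  simp only [hs, hH, trace, diag, mul_apply, outer, dotProduct, mulVec, Pi.star_apply,
    Finset.mul_sum]
  rw [Finset.sum_comm]
  exact Finset.sum_congr rfl fun i _ => Finset.sum_congr rfl fun j _ => by ring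

theorem trace_outer (v : α → ℂ) : (outer v).trace = star v ⬝ᵥ v := by
  simp [trace, outer, dotProduct, mul_comm]

theorem hs_add_right (P Q R : Mat α) : hs P (Q + R) = hs P Q + hs P R := by
  simp [hs, Matrix.mul_add]

theorem hs_smul_right (P Q : Mat α) (c : ℂ) : hs P (c • Q) = c * hs P Q := by
  simp [hs]

theorem outer_posSemidef (v : α → ℂ) : (outer v).PosSemidef :=
  posSemidef_vecMulVec_self_star v

theorem hs_outer_outer (v w : α → ℂ) :
    hs (outer v) (outer w) = (star v ⬝ᵥ w) * (star w ⬝ᵥ v) := by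
  have : outer w *ᵥ v = (star w ⬝ᵥ v) • w := by
    ext i
    simp only [outer, mulVec, dotProduct, Pi.smul_apply, smul_eq_mul, Pi.star_apply,
      Finset.sum_mul]
    exact Finset.sum_congr rfl fun j _ => by ring
  rw [hs_outer, this, dotProduct_smul, smul_eq_mul, mul_comm]

theorem Matrix.PosSemidef.dotProduct_mulVec_add_le {σ : Mat α} (hσ : σ.PosSemidef)
    (v w : α → ℂ) :
    star (v + w) ⬝ᵥ σ *ᵥ (v + w) ≤ 2 * (star v ⬝ᵥ σ *ᵥ v + star w ⬝ᵥ σ *ᵥ w) := by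
  have parallelogram : 2 * (star v ⬝ᵥ σ *ᵥ v + star w ⬝ᵥ σ *ᵥ w) - star (v + w) ⬝ᵥ σ *ᵥ (v + w)
      = star (v - w) ⬝ᵥ σ *ᵥ (v - w) := by
    simp only [star_add, star_sub, mulVec_add, mulVec_sub, dotProduct_add, dotProduct_sub,
      add_dotProduct, sub_dotProduct]
    ring
  exact sub_nonneg.mp (parallelogram ▸ hσ.dotProduct_mulVec_nonneg _)

end General

section Superposition

variable {α : Type} [DecidableEq α]

theorem ket_eq_single (p : α) : ket p = Pi.single p 1 := by
  ext r; simp [ket, Pi.single_apply]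

def superposition (p q : α) : α → ℂ := fun r => (ket p r + ket q r) / (Real.sqrt 2 : ℂ)

theorem superposition_eq (p q : α) :
    superposition p q = (Real.sqrt 2 : ℂ)⁻¹ • (ket p + ket q) := by
  ext r; simp [superposition, div_eq_inv_mul]

theorem sqrt_two_inv_mul_self : (Real.sqrt 2 : ℂ)⁻¹ * (Real.sqrt 2 : ℂ)⁻¹ = 1 / 2 := by
  rw [← mul_inv, ← Complex.ofReal_mul, Real.mul_self_sqrt zero_le_two]
  norm_num

theorem sqrt_two_inv_mul_star : (Real.sqrt 2 : ℂ)⁻¹ * star ((Real.sqrt 2 : ℂ)⁻¹) = 1 / 2 := by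
  rw [Complex.star_def, map_inv₀, Complex.conj_ofReal, sqrt_two_inv_mul_self]

variable [Fintype α]

theorem star_ket_dotProduct_mulVec_ket (σ : Mat α) (p : α) :
    star (ket p) ⬝ᵥ σ *ᵥ ket p = σ p p := by
  simp [ket_eq_single]

theorem star_ket_dotProduct_ket (p : α) : star (ket p) ⬝ᵥ ket p = 1 := by
  simp [ket_eq_single]

theorem hs_outer_superposition_le {σ : Mat α} (hσ : σ.PosSemidef) (p q : α) :
    hs (outer (superposition p q)) σ ≤ σ p p + σ q q := by
  have hle := hσ.dotProduct_mulVec_add_le (ket p) (ket q)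
  rw [star_ket_dotProduct_mulVec_ket, star_ket_dotProduct_mulVec_ket] at hle
  calc hs (outer (superposition p q)) σ
      = 1 / 2 * (star (ket p + ket q) ⬝ᵥ σ *ᵥ (ket p + ket q)) := by
        rw [hs_outer, superposition_eq, star_smul, mulVec_smul, dotProduct_smul, smul_dotProduct,
          smul_eq_mul, smul_eq_mul, ← mul_assoc, sqrt_two_inv_mul_star]
    _ ≤ 1 / 2 * (2 * (σ p p + σ q q)) := by gcongr
    _ = σ p p + σ q q := by ring

theorem star_superposition_dotProduct_self {p q : α} (h : p ≠ q) :
    star (superposition p q) ⬝ᵥ superposition p q = 1 := by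
  rw [superposition_eq, star_smul, dotProduct_smul, smul_dotProduct, smul_eq_mul, smul_eq_mul,
    ← mul_assoc, sqrt_two_inv_mul_star]
  norm_num [ket_eq_single, h, h.symm]

theorem star_superposition_dotProduct_ket {p q r : α} (hp : r ≠ p) (hq : r ≠ q) :
    star (superposition p q) ⬝ᵥ ket r = 0 := by
  simp [superposition_eq, ket_eq_single, hp.symm, hq.symm]

end Superposition

section PartialTrace

variable {α β : Type} [Fintype α]

theorem trace_ptrA [Fintype β] (σ : Mat (α × β)) : (ptrA σ).trace = σ.trace := by
  simp only [trace, diag, ptrA]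
  exact (Fintype.sum_prod_type_right fun p => σ p p).symm

theorem Matrix.PosSemidef.apply_le_ptrA {σ : Mat (α × β)} (hσ : σ.PosSemidef) (a : α) (b : β) :
    σ (a, b) (a, b) ≤ ptrA σ b b :=
  Finset.single_le_sum (f := fun a => σ (a, b) (a, b)) (fun _ _ => hσ.diag_nonneg)
    (Finset.mem_univ a)

end PartialTrace

theorem hs_outer_superposition_le_ptrA {α : Type} [Fintype α] [DecidableEq α]
    {σ : Mat (α × α)} (hσ : σ.PosSemidef) (a b : α) :
    hs (outer (superposition (a, a) (b, b))) σ ≤ ptrA σ a a + ptrA σ b b :=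
  (hs_outer_superposition_le hσ _ _).trans
    (add_le_add (hσ.apply_le_ptrA a a) (hσ.apply_le_ptrA b b))

def phiLo : Fin 3 → Fin 3 := ![0, 1, 0]
def phiHi : Fin 3 → Fin 3 := ![2, 2, 1]
def phiGap : Fin 3 → Fin 3 := ![1, 0, 2]

theorem phiD_eq_superposition (y : Fin 3) :
    phiD y = superposition (phiLo y, phiLo y) (phiHi y, phiHi y) := by
  fin_cases y <;> rfl

def optimalState (y : Fin 3) : Mat (Fin 3 × Fin 3) :=
  (2 / 3 : ℂ) • outer (phiD y) + (1 / 3 : ℂ) • outer (ket (phiGap y, phiGap y))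

theorem ptrA_optimalState (y : Fin 3) : ptrA (optimalState y) = (1 / 3 : ℂ) • 1 := by
  ext b b'
  fin_cases y <;> fin_cases b <;> fin_cases b' <;>
    simp [optimalState, ptrA, phiD, phiGap, outer, ket, Fin.sum_univ_three, one_apply,
      sqrt_two_inv_mul_self] <;> norm_num

theorem phiGap_ne_phiLo (y : Fin 3) : phiGap y ≠ phiLo y := by fin_cases y <;> decide
theorem phiGap_ne_phiHi (y : Fin 3) : phiGap y ≠ phiHi y := by fin_cases y <;> decide
theorem phiLo_ne_phiHi (y : Fin 3) : phiLo y ≠ phiHi y := by fin_cases y <;> decide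

theorem star_phiD_dotProduct_self (y : Fin 3) : star (phiD y) ⬝ᵥ phiD y = 1 := by
  rw [phiD_eq_superposition]
  exact star_superposition_dotProduct_self (by simpa using phiLo_ne_phiHi y)

theorem star_phiD_dotProduct_ket_phiGap (y : Fin 3) :
    star (phiD y) ⬝ᵥ ket (phiGap y, phiGap y) = 0 := by
  rw [phiD_eq_superposition]
  exact star_superposition_dotProduct_ket (by simpa using phiGap_ne_phiLo y)
    (by simpa using phiGap_ne_phiHi y)

theorem isDensity_optimalState (y : Fin 3) : IsDensity (optimalState y) := by
  refine ⟨.add ((outer_posSemidef _).smul (by norm_num [Complex.le_def]))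
    ((outer_posSemidef _).smul (by norm_num [Complex.le_def])), ?_⟩
  rw [optimalState, trace_add, trace_smul, trace_smul, trace_outer, trace_outer,
    star_phiD_dotProduct_self, star_ket_dotProduct_ket]
  norm_num

theorem hs_outer_phiD_optimalState (y : Fin 3) :
    hs (outer (phiD y)) (optimalState y) = 2 / 3 := by
  rw [optimalState, hs_add_right, hs_smul_right, hs_smul_right, hs_outer_outer, hs_outer_outer,
    star_phiD_dotProduct_self, star_phiD_dotProduct_ket_phiGap]
  norm_num

theorem sum_hs_outer_phiD_le {σ : Fin 3 → Mat (Fin 3 × Fin 3)} (hσ : ∀ y, IsDensity (σ y))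
    (hρ : ∀ y, ptrA (σ y) = ptrA (σ 0)) : ∑ y, hs (outer (phiD y)) (σ y) ≤ 2 :=
  calc ∑ y, hs (outer (phiD y)) (σ y)
      ≤ ∑ y, (ptrA (σ 0) (phiLo y) (phiLo y) + ptrA (σ 0) (phiHi y) (phiHi y)) :=
        Finset.sum_le_sum fun y _ => by
          rw [phiD_eq_superposition, ← hρ y]
          exact hs_outer_superposition_le_ptrA (hσ y).1 _ _
    _ = 2 * (ptrA (σ 0)).trace := by
        simp only [phiLo, phiHi, Fin.sum_univ_three, cons_val_zero, cons_val_one, cons_val,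
          trace, diag_apply]
        ring
    _ = 2 := by rw [trace_ptrA, (hσ 0).2, mul_one]

theorem die_rolling_cheating_Alice :
    IsGreatest
      {x : ℝ | ∃ σ0 σ1 σ2 : Mat (Fin 3 × Fin 3),
        IsDensity σ0 ∧ IsDensity σ1 ∧ IsDensity σ2 ∧
        ptrA σ0 = ptrA σ1 ∧ ptrA σ1 = ptrA σ2 ∧
        x = ((1/3 : ℂ) * (hs (outer (phiD 0)) σ0 + hs (outer (phiD 1)) σ1
            + hs (outer (phiD 2)) σ2)).re}
      (2/3)
    ∧ ∃ σ0 σ1 σ2 : Mat (Fin 3 × Fin 3),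
        IsDensity σ0 ∧ IsDensity σ1 ∧ IsDensity σ2 ∧
        ptrA σ0 = ptrA σ1 ∧ ptrA σ1 = ptrA σ2 ∧
        ptrA σ0 = (1/3 : ℂ) • (1 : Mat (Fin 3)) ∧
        ((1/3 : ℂ) * (hs (outer (phiD 0)) σ0 + hs (outer (phiD 1)) σ1
          + hs (outer (phiD 2)) σ2)).re = 2/3 := by
  have hmarg := ptrA_optimalState
  have hdens := isDensity_optimalState
  have hvalue : ((1/3 : ℂ) * (hs (outer (phiD 0)) (optimalState 0)
      + hs (outer (phiD 1)) (optimalState 1) + hs (outer (phiD 2)) (optimalState 2))).re = 2/3 := by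
    simp only [hs_outer_phiD_optimalState]
    norm_num
  refine ⟨⟨⟨_, _, _, hdens 0, hdens 1, hdens 2, (hmarg 0).trans (hmarg 1).symm,
    (hmarg 1).trans (hmarg 2).symm, hvalue.symm⟩, ?_⟩,
    _, _, _, hdens 0, hdens 1, hdens 2, (hmarg 0).trans (hmarg 1).symm,
    (hmarg 1).trans (hmarg 2).symm, hmarg 0, hvalue⟩
  rintro x ⟨σ0, σ1, σ2, h0, h1, h2, h01, h12, rfl⟩
  have hsum := sum_hs_outer_phiD_le (σ := ![σ0, σ1, σ2])
    (by intro y; fin_cases y <;> assumption)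
    (by intro y; fin_cases y <;> simp [h01, h12])
  simp only [Fin.sum_univ_three, cons_val_zero, cons_val_one, cons_val_two, head_cons,
    tail_cons] at hsum
  have hscaled := mul_le_mul_of_nonneg_left hsum (by norm_num [Complex.le_def] : (0 : ℂ) ≤ 1/3)
  have hre := (Complex.le_def.mp hscaled).1
  norm_num at hre ⊢
  linarith

end
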